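/- Let R be an associative unital ℂ-algebra with a derivation D (write r' := D r), let x ∈ R be central with x' = 1, let θ ∈ ℂ, and let f, g, b ∈ R with b' = 0. Define the 2×2 matrices over the Laurent polynomial ring R[μ, μ⁻¹] (μ a central invertible indeterminate): A(μ) = [[0,2],[0,0]]μ + [[−2f, 2f²−g+x+2b],[−2, 2f]] + [[0,0],[−g, −θ]]μ⁻¹ and B(μ) = [[0,1],[0,0]]μ + [[−f, 0],[−1, f]]. Then the zero-curvature equation ∂ₓA − ∂_μB + AB − BA = 0 holds identically in μ if and only if f' = −f² + g − (1/2)x − b and g' = gf + fg + θ. (The Harnad–Tracy–Widom pair HTW₂⁰ is an isomonodromic Lax pair exactly for the non-abelian system P₂⁰.) -/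
import Mathlib


/- STATEMENT 10: The Harnad–Tracy–Widom pair HTW₂⁰ is an isomonodromic Lax pair
exactly for the non-abelian system P₂⁰: the zero-curvature equation
∂ₓA − ∂_μB + AB − BA = 0 holds identically in μ iff f' = −f² + g − (1/2)x − b and
g' = gf + fg + θ. -/

noncomputable section

variable (R : Type*) [Ring R] [Algebra ℂ R]

/-- The μ-dependent matrix `A(μ)` of the Harnad–Tracy–Widom pair HTW₂⁰. -/
def HTW20Amat (f g b x : R) (θ : ℂ) (μ : ℂ) : Matrix (Fin 2) (Fin 2) R :=
  μ • !![(0 : R), 2; 0, 0]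
    + !![-2 * f, 2 * f ^ 2 - g + x + 2 * b; -2, 2 * f]
    + μ⁻¹ • !![(0 : R), 0; -g, -(algebraMap ℂ R θ)]

/-- The μ-dependent matrix `B(μ)` of the Harnad–Tracy–Widom pair HTW₂⁰. -/
def HTW20Bmat (f : R) (μ : ℂ) : Matrix (Fin 2) (Fin 2) R :=
  μ • !![(0 : R), 1; 0, 0] + !![-f, 0; -1, f]

theorem HTW20_zero_curvature_iff_P20
    (D : R →ₗ[ℂ] R) (hD : ∀ a b : R, D (a * b) = D a * b + a * D b)
    (x : R) (hx : ∀ r : R, x * r = r * x) (hx1 : D x = 1)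
    (θ : ℂ) (f g b : R) (hb : D b = 0) :
    (∀ μ : ℂ, μ ≠ 0 →
        (HTW20Amat R f g b x θ μ).map ⇑D - !![(0 : R), 1; 0, 0]
          + HTW20Amat R f g b x θ μ * HTW20Bmat R f μ
          - HTW20Bmat R f μ * HTW20Amat R f g b x θ μ = 0)
      ↔ (D f = -f ^ 2 + g - (1 / 2 : ℂ) • x - b ∧
          D g = g * f + f * g + algebraMap ℂ R θ) := by
  have hD1 : D 1 = 0 := by have := hD 1 1; simpa using this.symm
  have hD2 : D 2 = 0 := by
    have h : (2:R) = 1 + 1 := by norm_num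
    rw [h, map_add, hD1]; simp
  have hDθ : D (algebraMap ℂ R θ) = 0 := by
    rw [Algebra.algebraMap_eq_smul_one, map_smul, hD1, smul_zero]
  have h2eq : (2:R) = 1 + 1 := by norm_num
  constructor
  · intro h
    have H := h 1 one_ne_zero
    have e11 := congrFun (congrFun H 1) 1
    have e10 := congrFun (congrFun H 1) 0
    simp only [HTW20Amat, HTW20Bmat, Matrix.map_apply, Matrix.sub_apply, Matrix.add_apply,
      Matrix.smul_apply, Matrix.mul_apply, Fin.sum_univ_two, Matrix.cons_val', Matrix.cons_val_zero,
      Matrix.cons_val_one, Matrix.head_cons, Matrix.head_fin_const, Matrix.empty_val',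
      Matrix.cons_val_fin_one, Matrix.of_apply, Matrix.zero_apply, Fin.mk_zero, Fin.mk_one,
      Fin.isValue, pow_two, map_zero, map_add, map_sub, map_neg, map_smul, hD, hD1, hD2, hDθ, hb,
      hx1, inv_one, one_smul] at e11 e10
    simp only [smul_zero, mul_zero, zero_mul, add_zero, zero_add, neg_zero, smul_neg, neg_neg,
      mul_one, one_mul, mul_neg, neg_mul, mul_add, add_mul, mul_sub, sub_mul, mul_assoc,
      smul_mul_assoc, mul_smul_comm, two_mul, mul_two, Algebra.commutes, smul_add, smul_sub,
      smul_smul, h2eq] at e11 e10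
    constructor
    · have key : (2:ℂ) • (D f - (-(f * f) + g - (1 / 2 : ℂ) • x - b)) = 0 := by
        rw [← e11]
        match_scalars <;> ring
      have h3 : D f - (-(f * f) + g - (1 / 2 : ℂ) • x - b)
          = (1/2 : ℂ) • ((2:ℂ) • (D f - (-(f * f) + g - (1 / 2 : ℂ) • x - b))) := by
        rw [smul_smul]; norm_num
      rw [key, smul_zero] at h3
      rw [pow_two]
      exact sub_eq_zero.mp h3
    · have key : (g * f + f * g + algebraMap ℂ R θ) - D g = 0 := by
        rw [← e10]
        match_scalars <;> ring
      exact (sub_eq_zero.mp key).symm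
  · rintro ⟨h1, h2⟩ μ hμ
    ext i j
    fin_cases i <;> fin_cases j <;>
    · simp only [HTW20Amat, HTW20Bmat, Matrix.map_apply, Matrix.sub_apply, Matrix.add_apply,
        Matrix.smul_apply, Matrix.mul_apply, Fin.sum_univ_two, Matrix.cons_val',
        Matrix.cons_val_zero, Matrix.cons_val_one, Matrix.head_cons, Matrix.head_fin_const,
        Matrix.empty_val', Matrix.cons_val_fin_one, Matrix.of_apply, Matrix.zero_apply,
        Fin.mk_zero, Fin.mk_one, Fin.isValue, pow_two, map_zero, map_add, map_sub, map_neg,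
        map_smul, hD, hD1, hD2, hDθ, hb, hx1, h1, h2]
      simp only [smul_zero, mul_zero, zero_mul, add_zero, zero_add, neg_zero, smul_neg, neg_neg,
        mul_one, one_mul, mul_neg, neg_mul, mul_add, add_mul, mul_sub, sub_mul, mul_assoc,
        smul_mul_assoc, mul_smul_comm, two_mul, mul_two, Algebra.commutes, smul_add, smul_sub,
        smul_smul, h2eq]
      match_scalars <;> field_simp <;> ring
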